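/- Let 𝒞 be a Z2Z4-additive code and C = Φ(𝒞) the corresponding Z2Z4-linear code. For any x, y ∈ 𝒞, one has Φ(x) + Φ(y) ∈ K(C) if and only if Φ(x+y) ∈ K(C). -/

import Mathlib

/-- The ambient group `Z2^α × Z4^β`, with componentwise ring structure
(so `u * v` is the componentwise product). -/
abbrev Amb (α β : ℕ) := (Fin α → ZMod 2) × (Fin β → ZMod 4)

/-- The binary space `Z2^α × (Z2²)^β ≅ Z2^(α+2β)`. -/
abbrev Bin (α β : ℕ) := (Fin α → ZMod 2) × (Fin β → ZMod 2 × ZMod 2)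

/-- The Gray map `φ : Z4 → Z2²` with `φ(0)=(0,0), φ(1)=(0,1), φ(2)=(1,1), φ(3)=(1,0)`. -/
def grayPair (y : ZMod 4) : ZMod 2 × ZMod 2 :=
  match y.val with
  | 0 => (0, 0)
  | 1 => (0, 1)
  | 2 => (1, 1)
  | _ => (1, 0)

/-- The extended Gray map `Φ : Z2^α × Z4^β → Z2^(α+2β)`. -/
def Phi {α β : ℕ} (u : Amb α β) : Bin α β :=
  (u.1, fun i => grayPair (u.2 i))

/-- The kernel `K(C) = {x | x + C = C}` of a binary code. -/
def kernelK {α β : ℕ} (C : Set (Bin α β)) : Set (Bin α β) :=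
  {x | (fun y => x + y) '' C = C}

/-- The rank of a binary code: the `Z2`-dimension of its linear span. -/
noncomputable def rankOf {α β : ℕ} (C : Set (Bin α β)) : ℕ :=
  Module.finrank (ZMod 2) (Submodule.span (ZMod 2) C)

/-- The dimension of the kernel of a binary code. -/
noncomputable def kerDim {α β : ℕ} (C : Set (Bin α β)) : ℕ :=
  Module.finrank (ZMod 2) (Submodule.span (ZMod 2) (kernelK C))

/-- A `Z2Z4`-additive code `C ⊆ Z2^α × Z4^β` is of type `(α,β;γ,δ;κ)`:
`|C| = 2^(γ+2δ)`, the number of elements `x` with `2x = 0` is `2^(γ+δ)`, and `κ` is the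
`Z2`-dimension of the projection onto the first `α` coordinates of `{x ∈ C | 2x = 0}`. -/
def IsTypeOf (α β γ δ κ : ℕ) (C : AddSubgroup (Amb α β)) : Prop :=
  Nat.card C = 2 ^ (γ + 2 * δ) ∧
  Nat.card {x : Amb α β | x ∈ C ∧ 2 • x = 0} = 2 ^ (γ + δ) ∧
  Module.finrank (ZMod 2)
    (Submodule.span (ZMod 2) (Prod.fst '' {x : Amb α β | x ∈ C ∧ 2 • x = 0})) = κ

/-!
Componentwise, `φ(a) + φ(b) = φ(a + b + 2ab)` in `Z4` (and trivially in `Z2`), so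
`Φ(u) + Φ(v) = Φ(u + v + 2uv)`. Since `Φ` is injective, `Φ(z) ∈ K(C)` exactly when `z ∈ 𝒞` and
`2zc ∈ 𝒞` for all `c ∈ 𝒞`. Because `4 = 0`, this last condition does not see the correction
`2xy` separating `x + y + 2xy` from `x + y`, and taking `c = y` it already forces `2xy ∈ 𝒞`.
-/

lemma grayPair_add :
    ∀ a b : ZMod 4, grayPair a + grayPair b = grayPair (a + b + 2 * (a * b)) := by
  decide

lemma grayPair_injective : Function.Injective grayPair := by
  decide

section Amb

variable {α β : ℕ}

lemma Phi_add_Phi (u v : Amb α β) : Phi u + Phi v = Phi (u + v + 2 * (u * v)) := by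
  have h2 : ∀ a b : ZMod 2, a + b = a + b + 2 * (a * b) := by decide
  refine Prod.ext (funext fun i => h2 (u.1 i) (v.1 i)) (funext fun i => ?_)
  exact grayPair_add (u.2 i) (v.2 i)

lemma Phi_injective : Function.Injective (Phi (α := α) (β := β)) := fun _ _ h =>
  Prod.ext (congrArg Prod.fst h :)
    (funext fun i => grayPair_injective (congrFun (congrArg Prod.snd h) i))

lemma four_eq_zero : (4 : Amb α β) = 0 :=
  Prod.ext (funext fun _ => show (4 : ZMod 2) = 0 by decide)
    (funext fun _ => show (4 : ZMod 4) = 0 by decide)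

lemma two_mul_mul_self (y : Amb α β) : 2 * (y * y) = 2 * y := by
  have h2 : ∀ a : ZMod 2, 2 * (a * a) = 2 * a := by decide
  have h4 : ∀ a : ZMod 4, 2 * (a * a) = 2 * a := by decide
  exact Prod.ext (funext fun i => h2 (y.1 i)) (funext fun i => h4 (y.2 i))

lemma two_mul_add_two_mul_mul (u v c : Amb α β) :
    2 * ((u + v + 2 * (u * v)) * c) = 2 * ((u + v) * c) := by
  linear_combination (u * v * c) * four_eq_zero

end Amb

lemma mem_kernelK_iff {α β : ℕ} {S : Set (Bin α β)} {w : Bin α β} :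
    w ∈ kernelK S ↔ ∀ c ∈ S, w + c ∈ S := by
  refine ⟨fun h c hc => h ▸ Set.mem_image_of_mem _ hc, fun h => ?_⟩
  refine Set.Subset.antisymm (Set.image_subset_iff.2 h) fun z hz => ⟨w + z, h z hz, ?_⟩
  show w + (w + z) = z
  rw [← add_assoc, ZModModule.add_self, zero_add]

lemma Phi_mem_kernelK_iff {α β : ℕ} (C : AddSubgroup (Amb α β)) (z : Amb α β) :
    Phi z ∈ kernelK (Phi '' (C : Set (Amb α β))) ↔ z ∈ C ∧ ∀ c ∈ C, 2 * (z * c) ∈ C := by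
  have translate_mem : Phi z ∈ kernelK (Phi '' (C : Set (Amb α β))) ↔
      ∀ c ∈ C, z + c + 2 * (z * c) ∈ C := by
    simp only [mem_kernelK_iff, Set.forall_mem_image, Phi_add_Phi, Phi_injective.mem_set_image,
      SetLike.mem_coe]
  rw [translate_mem]
  refine ⟨fun h => ?_, fun ⟨hz, h⟩ c hc => C.add_mem (C.add_mem hz hc) (h c hc)⟩
  have hz : z ∈ C := by simpa using h 0 C.zero_mem
  exact ⟨hz, fun c hc => (C.add_mem_cancel_left (C.add_mem hz hc)).1 (h c hc)⟩

/-- for `x, y ∈ 𝒞`, `Φ(x) + Φ(y) ∈ K(C)` iff `Φ(x+y) ∈ K(C)`. -/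
theorem add_mem_kernel_iff (α β : ℕ) (C : AddSubgroup (Amb α β)) (x y : Amb α β)
    (hx : x ∈ C) (hy : y ∈ C) :
    Phi x + Phi y ∈ kernelK (Phi '' (C : Set (Amb α β))) ↔
      Phi (x + y) ∈ kernelK (Phi '' (C : Set (Amb α β))) := by
  rw [Phi_add_Phi, Phi_mem_kernelK_iff, Phi_mem_kernelK_iff]
  simp_rw [two_mul_add_two_mul_mul]
  have hsum : x + y ∈ C := C.add_mem hx hy
  have two_mul_mem (h : ∀ c ∈ C, 2 * ((x + y) * c) ∈ C) : 2 * (x * y) ∈ C := by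
    have hxy := h y hy
    rw [add_mul, mul_add, two_mul_mul_self] at hxy
    exact (C.add_mem_cancel_right (two_mul y ▸ C.add_mem hy hy)).1 hxy
  exact ⟨fun ⟨_, h⟩ => ⟨hsum, h⟩,
    fun ⟨_, h⟩ => ⟨(C.add_mem_cancel_left hsum).2 (two_mul_mem h), h⟩⟩
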